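/- arXiv:1101.3736 — 4 statements merged into one kernel-verified Lean document; each statement's English description precedes it below -/
import Mathlib

section
/- G-matrix mutation under sign-coherence (second formula of Proposition 1.3): fix an n×n skew-symmetrizable integer matrix B and a finite sequence w = (k_1,…,k_m) of indices, and let B_m = B^B(w), C_m = C^B(w), G_m = G^B(w). Suppose ℓ is an index and ε ∈ {1,-1} is a sign such that ε (C_m)_{iℓ} ≥ 0 for all i. Then G^B(w·ℓ) = G_m (J_ℓ + [-ε B_m]_+^{•ℓ}), where w·ℓ is the sequence w with ℓ appended. -/
open Matrix

/-- Entrywise positive part `[B]₊`. -/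
def matPos {n : ℕ} (B : Matrix (Fin n) (Fin n) ℤ) : Matrix (Fin n) (Fin n) ℤ :=
  fun i j => max (B i j) 0

/-- `B^{k•}` : the matrix `B` with all entries outside row `k` set to zero. -/
def rowR {n : ℕ} (B : Matrix (Fin n) (Fin n) ℤ) (k : Fin n) : Matrix (Fin n) (Fin n) ℤ :=
  fun i j => if i = k then B i j else 0

/-- `B^{•k}` : the matrix `B` with all entries outside column `k` set to zero. -/
def colR {n : ℕ} (B : Matrix (Fin n) (Fin n) ℤ) (k : Fin n) : Matrix (Fin n) (Fin n) ℤ :=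
  fun i j => if j = k then B i j else 0

/-- `J_k` : the identity matrix with its `(k,k)` entry replaced by `-1`. -/
def Jmat (n : ℕ) (k : Fin n) : Matrix (Fin n) (Fin n) ℤ :=
  Matrix.diagonal (fun i => if i = k then -1 else 1)

/-- Matrix mutation `μ_k(B)`. -/
def mutB {n : ℕ} (B : Matrix (Fin n) (Fin n) ℤ) (k : Fin n) : Matrix (Fin n) (Fin n) ℤ :=
  fun i j =>
    if i = k ∨ j = k then -B i j
    else B i j + max (B i k) 0 * max (B k j) 0 - max (-B i k) 0 * max (-B k j) 0

/-- Mutation of the `C`-matrix in direction `l`, where `B` is the current exchange matrix. -/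
def mutC {n : ℕ} (B C : Matrix (Fin n) (Fin n) ℤ) (l : Fin n) : Matrix (Fin n) (Fin n) ℤ :=
  fun i j =>
    if j = l then -C i j
    else C i j + max (C i l) 0 * max (B l j) 0 - max (-C i l) 0 * max (-B l j) 0

/-- One step of the simultaneous `(B, C, G)` recursion with initial exchange matrix `B0`. -/
def BCGstep {n : ℕ} (B0 : Matrix (Fin n) (Fin n) ℤ)
    (p : Matrix (Fin n) (Fin n) ℤ × Matrix (Fin n) (Fin n) ℤ × Matrix (Fin n) (Fin n) ℤ)
    (l : Fin n) :
    Matrix (Fin n) (Fin n) ℤ × Matrix (Fin n) (Fin n) ℤ × Matrix (Fin n) (Fin n) ℤ :=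
  (mutB p.1 l, mutC p.1 p.2.1 l,
    p.2.2 * (Jmat n l + colR (matPos p.1) l) - B0 * colR (matPos p.2.1) l)

/-- The triple `(B_m, C_m, G_m)` obtained from `(B0, I, I)` by mutating along the word `w`. -/
def BCG {n : ℕ} (B0 : Matrix (Fin n) (Fin n) ℤ) (w : List (Fin n)) :
    Matrix (Fin n) (Fin n) ℤ × Matrix (Fin n) (Fin n) ℤ × Matrix (Fin n) (Fin n) ℤ :=
  w.foldl (BCGstep B0) (B0, 1, 1)

/-- `B^B(w)` : the exchange matrix at the end of the word `w`. -/
def Bmat {n : ℕ} (B0 : Matrix (Fin n) (Fin n) ℤ) (w : List (Fin n)) : Matrix (Fin n) (Fin n) ℤ :=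
  (BCG B0 w).1

/-- `C^B(w)` : the matrix of c-vectors at the end of the word `w`. -/
def Cmat {n : ℕ} (B0 : Matrix (Fin n) (Fin n) ℤ) (w : List (Fin n)) : Matrix (Fin n) (Fin n) ℤ :=
  (BCG B0 w).2.1

/-- `G^B(w)` : the matrix of g-vectors at the end of the word `w`. -/
def Gmat {n : ℕ} (B0 : Matrix (Fin n) (Fin n) ℤ) (w : List (Fin n)) : Matrix (Fin n) (Fin n) ℤ :=
  (BCG B0 w).2.2

/-- `B` is skew-symmetrized by the diagonal matrix with (positive) diagonal entries `d`,
i.e. `Bᵀ = -D B D⁻¹`, stated integrally as `Bᵀ D = -(D B)`. -/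
def SkewSymmBy {n : ℕ} (B : Matrix (Fin n) (Fin n) ℤ) (d : Fin n → ℤ) : Prop :=
  (∀ i, 0 < d i) ∧ Bᵀ * Matrix.diagonal d = -(Matrix.diagonal d * B)

/-- `B` is skew-symmetrizable. -/
def SkewSymmetrizable {n : ℕ} (B : Matrix (Fin n) (Fin n) ℤ) : Prop :=
  ∃ d : Fin n → ℤ, SkewSymmBy B d

/-- Every column of `C` has all entries nonnegative or all entries nonpositive. -/
def SignCoherent {n : ℕ} (C : Matrix (Fin n) (Fin n) ℤ) : Prop :=
  ∀ j, (∀ i, 0 ≤ C i j) ∨ (∀ i, C i j ≤ 0)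

/-- The global sign-coherence hypothesis in rank `n`: all C-matrices of all cluster patterns
of rank `n` are sign-coherent. -/
def GlobalSC (n : ℕ) : Prop :=
  ∀ B' : Matrix (Fin n) (Fin n) ℤ, SkewSymmetrizable B' →
    ∀ w' : List (Fin n), SignCoherent (Cmat B' w')

/-- The sign `ε_j(C)` of the `j`-th column of a sign-coherent matrix `C`:
`-1` if column `j` contains a negative entry, `1` otherwise. -/
def epsCol {n : ℕ} (C : Matrix (Fin n) (Fin n) ℤ) (j : Fin n) : ℤ :=
  if ∃ i, C i j < 0 then -1 else 1

lemma mul_colR {n : ℕ} (M N : Matrix (Fin n) (Fin n) ℤ) (l : Fin n) :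
    M * colR N l = colR (M * N) l := by
  ext i j
  by_cases h : j = l <;> simp [h, Matrix.mul_apply, colR]

lemma colR_mul_apply {n : ℕ} (M N : Matrix (Fin n) (Fin n) ℤ) (l i j : Fin n) :
    (colR M l * N) i j = M i l * N l j := by
  simp [colR, Matrix.mul_apply, ite_mul]

lemma mul_rowR_apply {n : ℕ} (M N : Matrix (Fin n) (Fin n) ℤ) (l i j : Fin n) :
    (M * rowR N l) i j = M i l * N l j := by
  simp [rowR, Matrix.mul_apply, mul_ite]

lemma apply_JC_mul {n : ℕ} (X B : Matrix (Fin n) (Fin n) ℤ) (l i j : Fin n) :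
    ((Jmat n l + colR X l) * B) i j = (if i = l then -1 else 1) * B i j + X i l * B l j := by
  rw [Matrix.add_mul, Matrix.add_apply, colR_mul_apply]
  simp [Jmat, Matrix.diagonal_mul]

lemma apply_mul_JR {n : ℕ} (M X : Matrix (Fin n) (Fin n) ℤ) (l i j : Fin n) :
    (M * (Jmat n l + rowR X l)) i j = M i j * (if j = l then -1 else 1) + M i l * X l j := by
  rw [Matrix.mul_add, Matrix.add_apply, mul_rowR_apply]
  simp [Jmat, Matrix.mul_diagonal]

lemma keymax (x y : ℤ) : max x 0 * max y 0 - max (-x) 0 * max (-y) 0 = max (-x) 0 * y + x * max y 0 := by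
  rcases le_total x 0 with h|h <;> rcases le_total y 0 with h'|h'
  · rw [max_eq_right h, max_eq_right h', max_eq_left (by omega : (0:ℤ) ≤ -x),
      max_eq_left (by omega : (0:ℤ) ≤ -y)]; ring
  · rw [max_eq_right h, max_eq_left h', max_eq_left (by omega : (0:ℤ) ≤ -x),
      max_eq_right (by omega : -y ≤ (0:ℤ))]; ring
  · rw [max_eq_left h, max_eq_right h', max_eq_right (by omega : -x ≤ (0:ℤ)),
      max_eq_left (by omega : (0:ℤ) ≤ -y)]; ring
  · rw [max_eq_left h, max_eq_left h', max_eq_right (by omega : -x ≤ (0:ℤ)),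
      max_eq_right (by omega : -y ≤ (0:ℤ))]; ring

lemma mutB_factor {n : ℕ} (B : Matrix (Fin n) (Fin n) ℤ) (l : Fin n) (hb : B l l = 0) :
    mutB B l = (Jmat n l + colR (matPos (-B)) l) * B * (Jmat n l + rowR (matPos B) l) := by
  ext i j
  rw [apply_mul_JR, apply_JC_mul, apply_JC_mul]
  by_cases hi : i = l <;> by_cases hj : j = l <;>
    simp [mutB, matPos, hi, hj, hb] <;>
    linarith [keymax (B i l) (B l j)]

lemma mutC_factor {n : ℕ} (B C : Matrix (Fin n) (Fin n) ℤ) (l : Fin n) (hb : B l l = 0) :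
    mutC B C l = C * (Jmat n l + rowR (matPos B) l) + colR (matPos (-C)) l * rowR B l := by
  ext i j
  rw [Matrix.add_apply, apply_mul_JR, colR_mul_apply]
  by_cases hj : j = l <;>
    simp [mutC, matPos, rowR, hj, hb] <;>
    linarith [keymax (C i l) (B l j)]

lemma JPJQ {n : ℕ} (B : Matrix (Fin n) (Fin n) ℤ) (l : Fin n) (hb : B l l = 0) :
    (Jmat n l + colR (matPos B) l) * (Jmat n l + colR (matPos (-B)) l) = 1 - colR B l := by
  ext i j
  rw [apply_JC_mul]
  by_cases hi : i = l <;> by_cases hj : j = l <;>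
    simp [Jmat, Matrix.add_apply, colR, matPos, Matrix.diagonal_apply, Matrix.one_apply, hi, hj, hb] <;>
    omega

lemma PcJQ {n : ℕ} (B C : Matrix (Fin n) (Fin n) ℤ) (l : Fin n) (hb : B l l = 0) :
    colR (matPos C) l * (Jmat n l + colR (matPos (-B)) l) = -(colR (matPos C) l) := by
  ext i j
  rw [colR_mul_apply]
  by_cases hj : j = l <;> [skip; have hj' : ¬ l = j := fun h => hj h.symm] <;>
    simp_all [Jmat, Matrix.add_apply, colR, matPos, Matrix.diagonal_apply, hb]

lemma QcB_JR {n : ℕ} (B C : Matrix (Fin n) (Fin n) ℤ) (l : Fin n) (hb : B l l = 0) :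
    colR (matPos (-C)) l * B * (Jmat n l + rowR (matPos B) l)
      = colR (matPos (-C)) l * rowR B l := by
  ext i j
  rw [apply_mul_JR, colR_mul_apply, colR_mul_apply, mul_rowR_apply]
  by_cases hj : j = l <;> simp [colR, matPos, hj, hb]

lemma helper (a b c x y u v : ℤ) (ha : 0 < a) (hb : 0 < b) (hc : 0 < c)
    (h1 : a * x = -(c * v)) (h2 : b * y = -(c * u)) :
    (max x 0 * max u 0 - max (-x) 0 * max (-u) 0) * a
      = -(b * (max y 0 * max v 0 - max (-y) 0 * max (-v) 0)) := by
  rcases le_total x 0 with hx|hx <;> rcases le_total y 0 with hy|hy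
  · have hv : 0 ≤ v := by nlinarith
    have hu : 0 ≤ u := by nlinarith
    rw [max_eq_right hx, max_eq_right hy, max_eq_left (by omega : (0:ℤ) ≤ -x),
      max_eq_left (by omega : (0:ℤ) ≤ -y), max_eq_left hu, max_eq_left hv,
      max_eq_right (by omega : -u ≤ (0:ℤ)), max_eq_right (by omega : -v ≤ (0:ℤ))]
    ring
  · have hv : 0 ≤ v := by nlinarith
    have hu : u ≤ 0 := by nlinarith
    rw [max_eq_right hx, max_eq_left hy, max_eq_left (by omega : (0:ℤ) ≤ -x),
      max_eq_right (by omega : -y ≤ (0:ℤ)), max_eq_right hu, max_eq_left hv,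
      max_eq_left (by omega : (0:ℤ) ≤ -u), max_eq_right (by omega : -v ≤ (0:ℤ))]
    linear_combination (-u) * h1 + v * h2
  · have hv : v ≤ 0 := by nlinarith
    have hu : 0 ≤ u := by nlinarith
    rw [max_eq_left hx, max_eq_right hy, max_eq_right (by omega : -x ≤ (0:ℤ)),
      max_eq_left (by omega : (0:ℤ) ≤ -y), max_eq_left hu, max_eq_right hv,
      max_eq_right (by omega : -u ≤ (0:ℤ)), max_eq_left (by omega : (0:ℤ) ≤ -v)]
    linear_combination u * h1 - v * h2
  · have hv : v ≤ 0 := by nlinarith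
    have hu : u ≤ 0 := by nlinarith
    rw [max_eq_left hx, max_eq_left hy, max_eq_right (by omega : -x ≤ (0:ℤ)),
      max_eq_right (by omega : -y ≤ (0:ℤ)), max_eq_right hu, max_eq_right hv,
      max_eq_left (by omega : (0:ℤ) ≤ -u), max_eq_left (by omega : (0:ℤ) ≤ -v)]
    ring

lemma skew_entries {n : ℕ} {B : Matrix (Fin n) (Fin n) ℤ} {d : Fin n → ℤ}
    (h : SkewSymmBy B d) : ∀ i j, B j i * d j = -(d i * B i j) := by
  intro i j
  have := congrFun (congrFun h.2 i) j
  simpa [Matrix.mul_diagonal, Matrix.diagonal_mul, Matrix.transpose_apply,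
    Matrix.neg_apply] using this

lemma diag_zero {n : ℕ} {B : Matrix (Fin n) (Fin n) ℤ} {d : Fin n → ℤ}
    (h : SkewSymmBy B d) (i : Fin n) : B i i = 0 := by
  have h1 := skew_entries h i i
  have h2 := h.1 i
  have h3 : B i i * (2 * d i) = 0 := by linarith
  rcases mul_eq_zero.1 h3 with h4 | h4
  · exact h4
  · omega

lemma skew_mut {n : ℕ} {B : Matrix (Fin n) (Fin n) ℤ} {d : Fin n → ℤ}
    (h : SkewSymmBy B d) (l : Fin n) : SkewSymmBy (mutB B l) d := by
  refine ⟨h.1, ?_⟩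
  have h' := skew_entries h
  ext i j
  simp only [Matrix.mul_diagonal, Matrix.diagonal_mul, Matrix.transpose_apply, Matrix.neg_apply]
  by_cases hc : i = l ∨ j = l
  · have hc' : j = l ∨ i = l := hc.symm
    simp only [mutB, if_pos hc, if_pos hc']
    linarith [h' i j]
  · push_neg at hc
    have hc' : ¬ (j = l ∨ i = l) := by tauto
    simp only [mutB, if_neg (by tauto : ¬ (i = l ∨ j = l)), if_neg hc']
    have hh := helper (d j) (d i) (d l) (B j l) (B i l) (B l i) (B l j)
      (h.1 j) (h.1 i) (h.1 l) (by linarith [h' l j]) (by linarith [h' l i])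
    linarith [h' i j, hh]

lemma colR_sub_colR {n : ℕ} (C : Matrix (Fin n) (Fin n) ℤ) (l : Fin n) :
    colR (matPos C) l - colR C l = colR (matPos (-C)) l := by
  ext i j
  by_cases hj : j = l <;> simp [colR, matPos, hj] <;> omega

lemma step_eq {n : ℕ} (B0 B C G : Matrix (Fin n) (Fin n) ℤ) (d : Fin n → ℤ)
    (hB : SkewSymmBy B d) (hBC : B0 * C = G * B) (l : Fin n) :
    B0 * mutC B C l
      = (G * (Jmat n l + colR (matPos B) l) - B0 * colR (matPos C) l) * mutB B l := by
  have hb : B l l = 0 := diag_zero hB l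
  rw [mutB_factor B l hb, mutC_factor B C l hb]
  rw [← Matrix.mul_assoc, ← Matrix.mul_assoc]
  have h2 : (G * (Jmat n l + colR (matPos B) l) - B0 * colR (matPos C) l)
      * (Jmat n l + colR (matPos (-B)) l) = G + B0 * colR (matPos (-C)) l := by
    rw [Matrix.sub_mul, Matrix.mul_assoc, JPJQ B l hb, Matrix.mul_assoc, PcJQ B C l hb]
    rw [Matrix.mul_sub, Matrix.mul_one, Matrix.mul_neg, sub_neg_eq_add]
    rw [mul_colR, ← hBC, ← mul_colR, ← colR_sub_colR, Matrix.mul_sub]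
    abel
  rw [h2, Matrix.add_mul, Matrix.add_mul, Matrix.mul_assoc B0, Matrix.mul_assoc B0,
    QcB_JR B C l hb, Matrix.mul_add, ← hBC, Matrix.mul_assoc]

lemma inv_all {n : ℕ} (B0 : Matrix (Fin n) (Fin n) ℤ) (d : Fin n → ℤ)
    (h0 : SkewSymmBy B0 d) (w : List (Fin n)) :
    SkewSymmBy (BCG B0 w).1 d ∧ B0 * (BCG B0 w).2.1 = (BCG B0 w).2.2 * (BCG B0 w).1 := by
  induction w using List.reverseRecOn with
  | nil => exact ⟨h0, by simp [BCG]⟩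
  | append_singleton w l ih =>
    obtain ⟨h1, h2⟩ := ih
    have hfold : BCG B0 (w ++ [l]) = BCGstep B0 (BCG B0 w) l := by
      simp [BCG, List.foldl_append]
    rw [hfold]
    exact ⟨skew_mut h1 l, step_eq B0 _ _ _ d h1 h2 l⟩

/-- G-matrix mutation under sign-coherence: if column `l` of `C^B(w)` is
sign-coherent with sign `ε`, then `G^B(w·l) = G^B(w) (J_l + [-ε B^B(w)]₊^{•l})`. -/
theorem Gmat_mutation_of_signCoherent_column {n : ℕ} (B : Matrix (Fin n) (Fin n) ℤ)
    (hB : SkewSymmetrizable B) (w : List (Fin n)) (l : Fin n)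
    (ε : ℤ) (hε : ε = 1 ∨ ε = -1) (hsc : ∀ i, 0 ≤ ε * Cmat B w i l) :
    Gmat B (w ++ [l]) = Gmat B w * (Jmat n l + colR (matPos ((-ε) • Bmat B w)) l) := by
  obtain ⟨d, hd⟩ := hB
  obtain ⟨h1, h2⟩ := inv_all B d hd w
  have hfold : Gmat B (w ++ [l])
      = Gmat B w * (Jmat n l + colR (matPos (Bmat B w)) l)
        - B * colR (matPos (Cmat B w)) l := by
    simp [Gmat, Bmat, Cmat, BCG, List.foldl_append, BCGstep]
  rw [hfold]
  rcases hε with rfl | rfl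
  · -- ε = 1
    have hsc' : ∀ i, 0 ≤ Cmat B w i l := by intro i; have := hsc i; linarith
    have hC : colR (matPos (Cmat B w)) l = colR (Cmat B w) l := by
      ext i j
      by_cases hj : j = l <;> simp [colR, matPos, hj, max_eq_left (hsc' i)]
    have hsmul : ((-(1:ℤ)) • Bmat B w) = -(Bmat B w) := by
      simp
    have h2' : B * Cmat B w = Gmat B w * Bmat B w := h2
    have key : Gmat B w * colR (Bmat B w) l = B * colR (Cmat B w) l := by
      rw [mul_colR, ← h2', mul_colR]
    have hsplit : colR (matPos (Bmat B w)) l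
        = colR (matPos (-(Bmat B w))) l + colR (Bmat B w) l := by
      ext i j
      by_cases hj : j = l <;> simp [colR, matPos, hj] <;> omega
    rw [hsmul, hC, hsplit]
    rw [Matrix.mul_add, Matrix.mul_add, Matrix.mul_add, key]
    abel
  · -- ε = -1
    have hsc' : ∀ i, Cmat B w i l ≤ 0 := by intro i; have := hsc i; linarith
    have hC : colR (matPos (Cmat B w)) l = 0 := by
      ext i j
      by_cases hj : j = l <;> simp [colR, matPos, hj, max_eq_right (hsc' i)]
    have hsmul : ((-(-1:ℤ)) • Bmat B w) = Bmat B w := by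
      norm_num
    rw [hsmul, hC, Matrix.mul_zero, sub_zero]
end

section
/- Let B be an n×n integer matrix and D a diagonal matrix with positive integer diagonal entries such that Bᵀ = -D B D⁻¹. Then for every finite sequence w of indices in {1,…,n}: B^{-Bᵀ}(w) = -(B^B(w))ᵀ and C^{-Bᵀ}(w) = D C^B(w) D⁻¹. -/
open Matrix

section Aux

variable {n : ℕ}

private lemma maxpos_mul_pos {x c : ℤ} (hc : 0 < c) : max x 0 * c = max (x * c) 0 := by
  rw [max_mul_of_nonneg _ _ hc.le, zero_mul]

private lemma pos_mul_maxpos {x c : ℤ} (hc : 0 < c) : c * max x 0 = max (c * x) 0 := by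
  rw [mul_max_of_nonneg _ _ hc.le, mul_zero]

/-- entrywise skew condition -/
private def SkewE (B : Matrix (Fin n) (Fin n) ℤ) (d : Fin n → ℤ) : Prop :=
  ∀ i j, B j i * d j = -(d i * B i j)

private lemma mutB_negT (B : Matrix (Fin n) (Fin n) ℤ) (l : Fin n) :
    mutB (-Bᵀ) l = -(mutB B l)ᵀ := by
  funext i j
  simp only [mutB, Matrix.neg_apply, Matrix.transpose_apply, neg_neg]
  by_cases h : i = l ∨ j = l
  · rw [if_pos h, if_pos h.symm, neg_neg]
  · rw [if_neg h, if_neg (fun hh => h hh.symm)]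
    ring

private lemma mutB_skew {B : Matrix (Fin n) (Fin n) ℤ} {d : Fin n → ℤ}
    (hd : ∀ i, 0 < d i) (hB : SkewE B d) (l : Fin n) : SkewE (mutB B l) d := by
  intro i j
  simp only [mutB]
  by_cases h : j = l ∨ i = l
  · rw [if_pos h, if_pos h.symm]
    linear_combination -hB i j
  · rw [if_neg h, if_neg (fun hh => h hh.symm)]
    have h3 : max (-B j l) 0 * d j = d l * max (B l j) 0 := by
      rw [maxpos_mul_pos (hd j), pos_mul_maxpos (hd l)]
      congr 1; linear_combination -hB l j
    have h4 : max (B j l) 0 * d j = d l * max (-B l j) 0 := by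
      rw [maxpos_mul_pos (hd j), pos_mul_maxpos (hd l)]
      congr 1; linear_combination hB l j
    have h5 : max (B i l) 0 * d i = d l * max (-B l i) 0 := by
      rw [maxpos_mul_pos (hd i), pos_mul_maxpos (hd l)]
      congr 1; linear_combination hB l i
    have h6 : max (-B i l) 0 * d i = d l * max (B l i) 0 := by
      rw [maxpos_mul_pos (hd i), pos_mul_maxpos (hd l)]
      congr 1; linear_combination -hB l i
    linear_combination hB i j + max (B l i) 0 * h4 + max (B l j) 0 * h5
      - max (-B l i) 0 * h3 - max (-B l j) 0 * h6

private lemma mutC_rel {B C C' : Matrix (Fin n) (Fin n) ℤ} {d : Fin n → ℤ}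
    (hd : ∀ i, 0 < d i) (hB : SkewE B d)
    (hC : ∀ i j, C' i j * d j = d i * C i j) (l : Fin n) :
    ∀ i j, mutC (-Bᵀ) C' l i j * d j = d i * mutC B C l i j := by
  intro i j
  simp only [mutC, Matrix.neg_apply, Matrix.transpose_apply, neg_neg]
  by_cases h : j = l
  · rw [if_pos h, if_pos h]
    linear_combination -hC i j
  · rw [if_neg h, if_neg h]
    have h1 : max (C' i l) 0 * d l = d i * max (C i l) 0 := by
      rw [maxpos_mul_pos (hd l), pos_mul_maxpos (hd i)]
      congr 1; exact hC i l
    have h2 : max (-C' i l) 0 * d l = d i * max (-C i l) 0 := by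
      rw [maxpos_mul_pos (hd l), pos_mul_maxpos (hd i)]
      congr 1; linear_combination -hC i l
    have h3 : max (-B j l) 0 * d j = d l * max (B l j) 0 := by
      rw [maxpos_mul_pos (hd j), pos_mul_maxpos (hd l)]
      congr 1; linear_combination -hB l j
    have h4 : max (B j l) 0 * d j = d l * max (-B l j) 0 := by
      rw [maxpos_mul_pos (hd j), pos_mul_maxpos (hd l)]
      congr 1; linear_combination hB l j
    linear_combination hC i j + max (C' i l) 0 * h3 + max (B l j) 0 * h1
      - max (-C' i l) 0 * h4 - max (-B l j) 0 * h2

private lemma key {d : Fin n → ℤ} (hd : ∀ i, 0 < d i) :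
    ∀ (w : List (Fin n)) (B0 B0' : Matrix (Fin n) (Fin n) ℤ)
      (p q : Matrix (Fin n) (Fin n) ℤ × Matrix (Fin n) (Fin n) ℤ × Matrix (Fin n) (Fin n) ℤ),
      SkewE p.1 d → q.1 = -(p.1)ᵀ →
      (∀ i j, q.2.1 i j * d j = d i * p.2.1 i j) →
      (w.foldl (BCGstep B0') q).1 = -((w.foldl (BCGstep B0) p).1)ᵀ ∧
      (∀ i j, (w.foldl (BCGstep B0') q).2.1 i j * d j
        = d i * (w.foldl (BCGstep B0) p).2.1 i j) := by
  intro w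
  induction w with
  | nil => intro B0 B0' p q h1 h2 h3; exact ⟨h2, h3⟩
  | cons l t ih =>
    intro B0 B0' p q h1 h2 h3
    simp only [List.foldl_cons]
    apply ih
    · exact mutB_skew hd h1 l
    · show mutB q.1 l = -(mutB p.1 l)ᵀ
      rw [h2]; exact mutB_negT p.1 l
    · show ∀ i j, mutC q.1 q.2.1 l i j * d j = d i * mutC p.1 p.2.1 l i j
      rw [h2]; exact mutC_rel hd h1 h3 l

end Aux

/-- if `Bᵀ = -D B D⁻¹` with `D = diagonal d` having positive integer entries,
then `B^{-Bᵀ}(w) = -(B^B(w))ᵀ` and `C^{-Bᵀ}(w) = D C^B(w) D⁻¹`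
(the latter stated integrally as `C^{-Bᵀ}(w) D = D C^B(w)`). -/
theorem Bmat_Cmat_of_neg_transpose {n : ℕ} (B : Matrix (Fin n) (Fin n) ℤ) (d : Fin n → ℤ)
    (h : SkewSymmBy B d) (w : List (Fin n)) :
    Bmat (-Bᵀ) w = -(Bmat B w)ᵀ ∧
    Cmat (-Bᵀ) w * Matrix.diagonal d = Matrix.diagonal d * Cmat B w := by
  obtain ⟨hd, hsk⟩ := h
  have hB : SkewE B d := by
    intro i j
    have := congrFun (congrFun hsk i) j
    simpa [Matrix.mul_diagonal, Matrix.diagonal_mul] using this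
  have hinit : ∀ i j, (1 : Matrix (Fin n) (Fin n) ℤ) i j * d j
      = d i * (1 : Matrix (Fin n) (Fin n) ℤ) i j := by
    intro i j
    by_cases hij : i = j
    · subst hij; ring
    · simp [Matrix.one_apply, hij]
  obtain ⟨hBm, hCm⟩ := key hd w B (-Bᵀ) (B, 1, 1) (-Bᵀ, 1, 1) hB rfl hinit
  refine ⟨hBm, ?_⟩
  ext i j
  simp only [Matrix.mul_diagonal, Matrix.diagonal_mul]
  exact hCm i j
end

section
/- Identity (2.9) — the exchange matrix is determined by the initial exchange matrix and the C-matrix: assume the global sign-coherence hypothesis. Let B be an n×n integer matrix and D a diagonal matrix with positive integer diagonal entries such that Bᵀ = -D B D⁻¹. Then for every finite sequence w of indices in {1,…,n}, writing C = C^B(w), one has D B^B(w) = Cᵀ (D B) C. -/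
open Matrix

/-! ### Auxiliary material for the proof -/

section Aux

variable {n : ℕ}

private lemma pm_aux (b c : ℤ) :
    max (-b) 0 * c + b * max c 0 = max b 0 * max c 0 - max (-b) 0 * max (-c) 0 := by
  rcases le_total b 0 with hb | hb <;> rcases le_total c 0 with hc | hc
  · rw [max_eq_left (by linarith : (0:ℤ) ≤ -b), max_eq_right hc, max_eq_right hb,
      max_eq_left (by linarith : (0:ℤ) ≤ -c)]; ring
  · rw [max_eq_left (by linarith : (0:ℤ) ≤ -b), max_eq_left hc, max_eq_right hb,
      max_eq_right (by linarith : -c ≤ (0:ℤ))]; ring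
  · rw [max_eq_right (by linarith : -b ≤ (0:ℤ)), max_eq_right hc, max_eq_left hb,
      max_eq_left (by linarith : (0:ℤ) ≤ -c)]; ring
  · rw [max_eq_right (by linarith : -b ≤ (0:ℤ)), max_eq_left hc, max_eq_left hb,
      max_eq_right (by linarith : -c ≤ (0:ℤ))]; ring

private lemma pm_aux' (b c : ℤ) :
    max b 0 * c + b * max (-c) 0 = max b 0 * max c 0 - max (-b) 0 * max (-c) 0 := by
  have := pm_aux (-b) (-c)
  simp only [neg_neg] at this
  linarith

/-- The scalar identity behind the `C`-mutation rewriting, valid when `ε` is the sign of `c`. -/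
private lemma c_aux (ε c b : ℤ) (hε : ε = 1 ∨ ε = -1) (hc : 0 ≤ ε * c) :
    c * max (ε * b) 0 = max c 0 * max b 0 - max (-c) 0 * max (-b) 0 := by
  rcases hε with rfl | rfl
  · rw [one_mul] at hc ⊢
    rw [max_eq_left hc, max_eq_right (by linarith : -c ≤ (0:ℤ))]; ring
  · have hc' : c ≤ 0 := by linarith
    rw [max_eq_right hc', max_eq_left (by linarith : (0:ℤ) ≤ -c)]
    have hb : (-1 : ℤ) * b = -b := by ring
    rw [hb]; ring

private lemma colR_mul (Q A : Matrix (Fin n) (Fin n) ℤ) (l : Fin n) :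
    colR Q l * A = Matrix.of fun i j => Q i l * A l j := by
  ext i j
  simp only [Matrix.mul_apply, colR, Matrix.of_apply, ite_mul, zero_mul]
  simp [Finset.sum_ite_eq']

private lemma mul_rowR (A M : Matrix (Fin n) (Fin n) ℤ) (l : Fin n) :
    A * rowR M l = Matrix.of fun i j => A i l * M l j := by
  ext i j
  simp only [Matrix.mul_apply, rowR, Matrix.of_apply, mul_ite, mul_zero]
  simp [Finset.sum_ite_eq']

/-- `F = J_l + [εB]₊^{l•}` -/
private def Faux (Bi : Matrix (Fin n) (Fin n) ℤ) (l : Fin n) (ε : ℤ) :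
    Matrix (Fin n) (Fin n) ℤ :=
  Jmat n l + rowR (Matrix.of fun i j => max (ε * Bi i j) 0) l

/-- `E = J_l + [-εB]₊^{•l}` -/
private def Eaux (Bi : Matrix (Fin n) (Fin n) ℤ) (l : Fin n) (ε : ℤ) :
    Matrix (Fin n) (Fin n) ℤ :=
  Jmat n l + colR (Matrix.of fun i j => max (-(ε * Bi i j)) 0) l

private lemma mul_Faux (X Bi : Matrix (Fin n) (Fin n) ℤ) (l : Fin n) (ε : ℤ) :
    X * Faux Bi l ε
      = Matrix.of fun i j =>
          X i j * (if j = l then -1 else 1) + X i l * max (ε * Bi l j) 0 := by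
  rw [Faux, Matrix.mul_add, mul_rowR]
  ext i j
  simp [Jmat, Matrix.mul_diagonal]

private lemma Eaux_mul (Bi A : Matrix (Fin n) (Fin n) ℤ) (l : Fin n) (ε : ℤ) :
    Eaux Bi l ε * A
      = Matrix.of fun i j =>
          (if i = l then -1 else 1) * A i j + max (-(ε * Bi i l)) 0 * A l j := by
  rw [Eaux, Matrix.add_mul, colR_mul]
  ext i j
  simp [Jmat, Matrix.diagonal_mul]

/-- The C-mutation is right multiplication by `Faux`. -/
private lemma mutC_eq_mul (Bi C : Matrix (Fin n) (Fin n) ℤ) (l : Fin n) (ε : ℤ)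
    (hBll : Bi l l = 0) (hε : ε = 1 ∨ ε = -1) (hcol : ∀ i, 0 ≤ ε * C i l) :
    mutC Bi C l = C * Faux Bi l ε := by
  rw [mul_Faux]
  ext i j
  simp only [mutC, Matrix.of_apply]
  by_cases hj : j = l
  · simp [hj, hBll]
  · simp only [hj, if_false, mul_one]
    have := c_aux ε (C i l) (Bi l j) hε (hcol i)
    linarith

/-- The B-mutation is `Eaux * Bi * Faux`. -/
private lemma mutB_eq_mul (Bi : Matrix (Fin n) (Fin n) ℤ) (l : Fin n) (ε : ℤ)
    (hBll : Bi l l = 0) (hε : ε = 1 ∨ ε = -1) :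
    mutB Bi l = Eaux Bi l ε * Bi * Faux Bi l ε := by
  rw [Eaux_mul, mul_Faux]
  ext i j
  simp only [mutB, Matrix.of_apply]
  by_cases hi : i = l <;> by_cases hj : j = l
  · simp [hi, hj, hBll]
  · simp [hi, hj, hBll]
  · simp [hi, hj, hBll]
  · simp only [hi, hj, or_self, if_false, ite_false, hBll, mul_zero, add_zero, mul_one]
    rcases hε with rfl | rfl
    · simp only [one_mul]
      linarith [pm_aux (Bi i l) (Bi l j)]
    · have h1 : (-(-1 * Bi i l) : ℤ) = Bi i l := by ring
      have h2 : ((-1 : ℤ) * Bi l j) = -Bi l j := by ring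
      rw [h1, h2]
      simp only [one_mul]
      linarith [pm_aux' (Bi i l) (Bi l j)]

/-- `D · Eaux = Fauxᵀ · D`, using skew-symmetry of `D Bi` and positivity of `d`. -/
private lemma DE_eq_FtD (Bi : Matrix (Fin n) (Fin n) ℤ) (l : Fin n) (ε : ℤ)
    (d : Fin n → ℤ) (hd : ∀ i, 0 < d i) (hBll : Bi l l = 0)
    (hskew : ∀ i j, d j * Bi j i = -(d i * Bi i j)) :
    Matrix.diagonal d * Eaux Bi l ε = (Faux Bi l ε)ᵀ * Matrix.diagonal d := by
  ext i j
  rw [Matrix.diagonal_mul, Matrix.mul_diagonal, Matrix.transpose_apply]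
  simp only [Eaux, Faux, Matrix.add_apply, colR, rowR, Jmat, Matrix.of_apply,
    Matrix.diagonal_apply]
  by_cases hj : j = l
  · by_cases hi : i = l
    · simp [hi, hj, hBll]
    · have hij : ¬ i = j := by rw [hj]; exact hi
      have hli : ¬ l = i := fun e => hi e.symm
      simp only [hj, hi, hli, if_false, if_true, zero_add]
      rw [mul_max_of_nonneg _ _ (le_of_lt (hd i)), mul_zero,
        mul_comm _ (d l), mul_max_of_nonneg _ _ (le_of_lt (hd l)), mul_zero]
      congr 1
      · linear_combination (-ε) * hskew i l
  · simp only [hj, if_false, add_zero]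
    by_cases hij : i = j
    · simp [hij, hj, mul_comm]
    · have hji : ¬ j = i := fun e => hij e.symm
      simp [hij, hji]

private lemma BCG_append (B0 : Matrix (Fin n) (Fin n) ℤ) (w : List (Fin n)) (l : Fin n) :
    BCG B0 (w ++ [l]) = BCGstep B0 (BCG B0 w) l := by
  simp [BCG, List.foldl_append]

end Aux


/-- identity (2.9): under the global sign-coherence hypothesis, if
`Bᵀ = -D B D⁻¹` with `D = diagonal d` having positive integer entries, then, with
`C = C^B(w)`, one has `D B^B(w) = Cᵀ (D B) C`. -/
theorem Bmat_determined_by_Cmat {n : ℕ} (hGSC : GlobalSC n) (B : Matrix (Fin n) (Fin n) ℤ)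
    (d : Fin n → ℤ) (h : SkewSymmBy B d) (w : List (Fin n)) :
    Matrix.diagonal d * Bmat B w
      = (Cmat B w)ᵀ * (Matrix.diagonal d * B) * Cmat B w := by
  induction w using List.reverseRecOn with
  | nil =>
      simp [Bmat, Cmat, BCG, Matrix.transpose_one]
  | append_singleton w l ih =>
      have hBm : Bmat B (w ++ [l]) = mutB (Bmat B w) l := by
        simp [Bmat, BCG_append, BCGstep]
      have hCm : Cmat B (w ++ [l]) = mutC (Bmat B w) (Cmat B w) l := by
        simp [Cmat, Bmat, BCG_append, BCGstep]
      set D := Matrix.diagonal d with hD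
      set Bi := Bmat B w with hBi
      set C := Cmat B w with hC
      -- skew-symmetry of D * Bi, from the induction hypothesis
      have hsk1 : (D * Bi)ᵀ = -(D * Bi) := by
        rw [ih, Matrix.transpose_mul, Matrix.transpose_mul, Matrix.transpose_transpose,
          Matrix.transpose_mul, hD, Matrix.diagonal_transpose, h.2, ← hD]
        simp only [Matrix.neg_mul, Matrix.mul_neg, Matrix.mul_assoc]
      have hskew : ∀ i j, d j * Bi j i = -(d i * Bi i j) := by
        intro i j
        have h1 := congrFun (congrFun hsk1 i) j
        simpa [hD, Matrix.transpose_apply, Matrix.diagonal_mul, Matrix.neg_apply] using h1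
      have hBll : Bi l l = 0 := by
        have h2 : d l * Bi l l = 0 := by linarith [hskew l l]
        exact (mul_eq_zero.mp h2).resolve_left (ne_of_gt (h.1 l))
      have hsc : SignCoherent C := hGSC B ⟨d, h⟩ w
      set ε := epsCol C l with hε
      have hεpm : ε = 1 ∨ ε = -1 := by
        rw [hε, epsCol]
        split
        · right; rfl
        · left; rfl
      have hcol : ∀ i, 0 ≤ ε * C i l := by
        intro i
        rw [hε, epsCol]
        split
        · next hex =>
            rcases hsc l with hpos | hneg
            · obtain ⟨i0, hi0⟩ := hex
              exact absurd (hpos i0) (not_le.mpr hi0)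
            · have := hneg i
              nlinarith
        · next hnex =>
            have hci : ¬ C i l < 0 := fun hc => hnex ⟨i, hc⟩
            push_neg at hci
            nlinarith
      set F := Faux Bi l ε with hF
      set E := Eaux Bi l ε with hE
      have hmc : mutC Bi C l = C * F := mutC_eq_mul Bi C l ε hBll hεpm hcol
      have hmb : mutB Bi l = E * Bi * F := mutB_eq_mul Bi l ε hBll hεpm
      have hde : D * E = Fᵀ * D := DE_eq_FtD Bi l ε d h.1 hBll hskew
      rw [hBm, hCm, hmc, hmb]
      calc D * (E * Bi * F)
          = (D * E) * (Bi * F) := by simp only [Matrix.mul_assoc]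
        _ = Fᵀ * (D * Bi * F) := by rw [hde]; simp only [Matrix.mul_assoc]
        _ = Fᵀ * (Cᵀ * (D * B) * C * F) := by rw [ih]
        _ = (C * F)ᵀ * (D * B) * (C * F) := by
            rw [Matrix.transpose_mul]
            simp only [Matrix.mul_assoc]
end

section
/- Proposition 1.4 (mutation of C-matrices at the initial vertex): assume the global sign-coherence hypothesis. Let B be an n×n skew-symmetrizable integer matrix, k ∈ {1,…,n}, and w = (k_1,…,k_m) a finite sequence of indices in {1,…,n}. Let ε = ε_k(C^{-B^B(w)}(rev w)), where rev w = (k_m,…,k_1). Then C^{μ_k(B)}(k·w) = (J_k + [-εB]_+^{k•}) C^B(w), where k·w = (k, k_1,…,k_m) is the sequence w with k prepended. -/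
open Matrix

namespace CP
open Matrix
variable {n : ℕ}

/-! ### scalar lemmas -/

lemma maxpos {x : ℤ} (h : 0 ≤ x) : max x 0 = x := max_eq_left h
lemma maxneg {x : ℤ} (h : x ≤ 0) : max x 0 = 0 := max_eq_right h

lemma pos_smul (a x : ℤ) (ha : 0 ≤ a) : max (a * x) 0 = a * max x 0 := by
  rcases le_or_gt 0 x with hx | hx
  · rw [maxpos hx, maxpos (mul_nonneg ha hx)]
  · rw [maxneg hx.le, maxneg (mul_nonpos_of_nonneg_of_nonpos ha hx.le), mul_zero]

lemma key1 {x : ℤ} (y : ℤ) (hx : 0 ≤ x) :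
    x * max y 0 = max x 0 * max y 0 - max (-x) 0 * max (-y) 0 := by
  rw [maxpos hx, maxneg (neg_nonpos_of_nonneg hx)]; ring

lemma key1' {x : ℤ} (y : ℤ) (hx : x ≤ 0) :
    x * max (-y) 0 = max x 0 * max y 0 - max (-x) 0 * max (-y) 0 := by
  rw [maxneg hx, maxpos (neg_nonneg_of_nonpos hx)]; ring

lemma key2 (u v ε : ℤ) (hε : ε = 1 ∨ ε = -1) :
    u * max (ε * v) 0 + v * max (-(ε * u)) 0
      = max u 0 * max v 0 - max (-u) 0 * max (-v) 0 := by
  rcases le_or_gt 0 u with hu | hu <;> rcases le_or_gt 0 v with hv | hv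
  · rw [maxpos hu, maxpos hv, maxneg (by omega : -u ≤ (0:ℤ)),
      maxneg (by omega : -v ≤ (0:ℤ))]
    rcases hε with h | h <;> subst h
    · rw [one_mul, maxpos hv, maxneg (by omega : -(1*u) ≤ (0:ℤ))]; ring
    · rw [maxneg (by nlinarith : (-1)*v ≤ (0:ℤ)), maxpos (by nlinarith : (0:ℤ) ≤ -(-1*u))]
      ring
  · rw [maxpos hu, maxneg hv.le, maxneg (by omega : -u ≤ (0:ℤ)),
      maxpos (by omega : (0:ℤ) ≤ -v)]
    rcases hε with h | h <;> subst h
    · rw [maxneg (by nlinarith : 1*v ≤ (0:ℤ)), maxneg (by omega : -(1*u) ≤ (0:ℤ))]; ring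
    · rw [maxpos (by nlinarith : (0:ℤ) ≤ -1*v), maxpos (by nlinarith : (0:ℤ) ≤ -(-1*u))]
      nlinarith [hv.le]
  · rw [maxneg hu.le, maxpos hv, maxpos (by omega : (0:ℤ) ≤ -u),
      maxneg (by omega : -v ≤ (0:ℤ))]
    rcases hε with h | h <;> subst h
    · rw [maxpos (by omega : (0:ℤ) ≤ 1*v), maxpos (by nlinarith : (0:ℤ) ≤ -(1*u))]
      nlinarith
    · rw [maxneg (by nlinarith : -1*v ≤ (0:ℤ)), maxneg (by nlinarith : -(-1*u) ≤ (0:ℤ))]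
      ring
  · rw [maxneg hu.le, maxneg hv.le, maxpos (by omega : (0:ℤ) ≤ -u),
      maxpos (by omega : (0:ℤ) ≤ -v)]
    rcases hε with h | h <;> subst h
    · rw [maxneg (by nlinarith : 1*v ≤ (0:ℤ)), maxpos (by nlinarith : (0:ℤ) ≤ -(1*u))]
      nlinarith
    · rw [maxpos (by nlinarith : (0:ℤ) ≤ -1*v), maxneg (by nlinarith : -(-1*u) ≤ (0:ℤ))]
      nlinarith

/-! ### matrix entry lemmas -/

lemma Jmat_apply (k i j : Fin n) :
    Jmat n k i j = if i = j then (if i = k then (-1 : ℤ) else 1) else 0 :=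
  Matrix.diagonal_apply _ i j

lemma mul_Jmat (A : Matrix (Fin n) (Fin n) ℤ) (l i j : Fin n) :
    (A * Jmat n l) i j = if j = l then -(A i j) else A i j := by
  rw [Jmat, Matrix.mul_diagonal]; split <;> ring

lemma Jmat_mul (A : Matrix (Fin n) (Fin n) ℤ) (l i j : Fin n) :
    (Jmat n l * A) i j = if i = l then -(A i j) else A i j := by
  rw [Jmat, Matrix.diagonal_mul]; split <;> ring

lemma mul_rowR (A X : Matrix (Fin n) (Fin n) ℤ) (l i j : Fin n) :
    (A * rowR X l) i j = A i l * X l j := by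
  rw [Matrix.mul_apply]
  rw [Finset.sum_eq_single l]
  · simp [rowR]
  · intro b _ hb; simp [rowR, hb]
  · simp
  
lemma rowR_mul (X A : Matrix (Fin n) (Fin n) ℤ) (l : Fin n) :
    rowR X l * A = rowR (X * A) l := by
  ext i j
  by_cases hi : i = l
  · subst hi; simp [Matrix.mul_apply, rowR]
  · simp [Matrix.mul_apply, rowR, hi]

/-- The elementary matrix `J_l + [ε E]₊^{l•}`. -/
def Mm (E : Matrix (Fin n) (Fin n) ℤ) (l : Fin n) (ε : ℤ) : Matrix (Fin n) (Fin n) ℤ :=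
  Jmat n l + rowR (matPos (ε • E)) l

lemma matPos_smul_apply (E : Matrix (Fin n) (Fin n) ℤ) (ε : ℤ) (i j : Fin n) :
    matPos (ε • E) i j = max (ε * E i j) 0 := rfl

lemma mul_Mm_apply {E : Matrix (Fin n) (Fin n) ℤ} {l : Fin n} (hE : E l l = 0)
    (ε : ℤ) (A : Matrix (Fin n) (Fin n) ℤ) (i j : Fin n) :
    (A * Mm E l ε) i j
      = if j = l then -(A i j) else A i j + A i l * max (ε * E l j) 0 := by
  rw [Mm, Matrix.mul_add, Matrix.add_apply, mul_Jmat, mul_rowR, matPos_smul_apply]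
  split
  · rename_i h; subst h; rw [hE]; simp
  · rfl

lemma Mm_mul_apply_ne {E : Matrix (Fin n) (Fin n) ℤ} {l i : Fin n} (hi : i ≠ l)
    (ε : ℤ) (A : Matrix (Fin n) (Fin n) ℤ) (j : Fin n) :
    (Mm E l ε * A) i j = A i j := by
  rw [Mm, Matrix.add_mul, Matrix.add_apply, Jmat_mul, rowR_mul]
  simp [rowR, hi]

lemma Mm_mul_apply_row {E : Matrix (Fin n) (Fin n) ℤ} {l : Fin n}
    (ε : ℤ) (A : Matrix (Fin n) (Fin n) ℤ) (j : Fin n) :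
    (Mm E l ε * A) l j = -(A l j) + ∑ p, max (ε * E l p) 0 * A p j := by
  rw [Mm, Matrix.add_mul, Matrix.add_apply, Jmat_mul, rowR_mul, if_pos rfl]
  congr 1
  show (if l = l then (matPos (ε • E) * A) l j else 0) = _
  rw [if_pos rfl, Matrix.mul_apply]
  exact Finset.sum_congr rfl fun p _ => by rw [matPos_smul_apply]

lemma Mm_transpose_mul_apply {E : Matrix (Fin n) (Fin n) ℤ} {l : Fin n}
    (ε : ℤ) (A : Matrix (Fin n) (Fin n) ℤ) (i j : Fin n) :
    ((Mm E l ε)ᵀ * A) i j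
      = (if i = l then -(A l j) else A i j) + max (ε * E l i) 0 * A l j := by
  rw [Mm, Matrix.transpose_add, Matrix.add_mul, Matrix.add_apply]
  have h1 : (Jmat n l)ᵀ = Jmat n l := Matrix.diagonal_transpose _
  rw [h1, Jmat_mul]
  have h2 : ((rowR (matPos (ε • E)) l)ᵀ * A) i j = max (ε * E l i) 0 * A l j := by
    rw [Matrix.mul_apply]
    rw [Finset.sum_eq_single l]
    · rw [Matrix.transpose_apply, rowR, if_pos rfl, matPos_smul_apply]
    · intro b _ hb; rw [Matrix.transpose_apply, rowR, if_neg hb, zero_mul]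
    · simp
  rw [h2]
  split <;> rename_i h
  · subst h; rfl
  · rfl

lemma Mm_apply' (E : Matrix (Fin n) (Fin n) ℤ) (l : Fin n) (ε : ℤ) (a b : Fin n) :
    Mm E l ε a b
      = (if a = b then (if a = l then (-1:ℤ) else 1) else 0)
        + (if a = l then max (ε * E l b) 0 else 0) := by
  rw [Mm, Matrix.add_apply, Jmat_apply]
  congr 1
  by_cases ha : a = l
  · rw [ha]
    show (if l = l then matPos (ε • E) l b else 0) = _
    rw [if_pos rfl, if_pos rfl, matPos_smul_apply]
  · show (if a = l then matPos (ε • E) a b else 0) = _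
    rw [if_neg ha, if_neg ha]

lemma Mm_mul_Mm {E : Matrix (Fin n) (Fin n) ℤ} {l : Fin n} (hE : E l l = 0) (ε : ℤ) :
    Mm E l ε * Mm E l ε = 1 := by
  ext i j
  rw [mul_Mm_apply hE, Matrix.one_apply]
  by_cases hj : j = l
  · rw [if_pos hj, Mm_apply', hj, hE, mul_zero]
    by_cases hil : i = l
    · rw [hil]; simp
    · simp [hil]
  · rw [if_neg hj, Mm_apply', Mm_apply', hE, mul_zero]
    have h0 : max (ε * E l j) 0 * 0 = 0 := mul_zero _
    by_cases hil : i = l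
    · rw [hil]
      have : l ≠ j := fun h => hj h.symm
      simp [this]
    · simp [hil]

end CP
namespace CP
open Matrix
variable {n : ℕ}

/-! ### skew-symmetrizability -/

lemma skewEntry {B : Matrix (Fin n) (Fin n) ℤ} {d : Fin n → ℤ}
    (h : SkewSymmBy B d) (i j : Fin n) : B j i * d j = -(d i * B i j) := by
  have := congrFun (congrFun h.2 i) j
  rwa [Matrix.mul_diagonal, Matrix.neg_apply, Matrix.diagonal_mul, Matrix.transpose_apply] at this

lemma skew_of_entry {B : Matrix (Fin n) (Fin n) ℤ} {d : Fin n → ℤ}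
    (hpos : ∀ i, 0 < d i) (h : ∀ i j, B j i * d j = -(d i * B i j)) : SkewSymmBy B d := by
  refine ⟨hpos, ?_⟩
  ext i j
  rw [Matrix.mul_diagonal, Matrix.neg_apply, Matrix.diagonal_mul, Matrix.transpose_apply]
  exact h i j

lemma skewDiag {B : Matrix (Fin n) (Fin n) ℤ} {d : Fin n → ℤ}
    (h : SkewSymmBy B d) (i : Fin n) : B i i = 0 := by
  have h1 := skewEntry h i i
  have h2 := (h.1 i).ne'
  have : B i i * d i = 0 := by linarith [h1]
  rcases mul_eq_zero.mp this with h3 | h3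
  · exact h3
  · exact absurd h3 h2

lemma skewNeg {B : Matrix (Fin n) (Fin n) ℤ} {d : Fin n → ℤ}
    (h : SkewSymmBy B d) : SkewSymmBy (-B) d :=
  skew_of_entry h.1 fun i j => by
    rw [Matrix.neg_apply, Matrix.neg_apply, neg_mul, skewEntry h i j]; ring

lemma skewMut {B : Matrix (Fin n) (Fin n) ℤ} {d : Fin n → ℤ}
    (h : SkewSymmBy B d) (k : Fin n) : SkewSymmBy (mutB B k) d := by
  refine skew_of_entry h.1 fun i j => ?_
  show mutB B k j i * d j = -(d i * mutB B k i j)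
  rw [mutB, mutB]
  by_cases hik : i = k
  · rw [if_pos (Or.inr hik), if_pos (Or.inl hik), neg_mul, skewEntry h i j]; ring
  · by_cases hjk : j = k
    · rw [if_pos (Or.inl hjk), if_pos (Or.inr hjk), neg_mul, skewEntry h i j]; ring
    · rw [if_neg (by tauto), if_neg (by tauto)]
      have e0 := skewEntry h i j
      -- d j * [B j k]₊ = d k * [-B k j]₊  etc (after mult. by appropriate positives)
      have hdj := (h.1 j).le
      have hdk := (h.1 k).le
      have hdi := (h.1 i).le
      have e1 : d j * max (B j k) 0 = d k * max (-(B k j)) 0 := by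
        rw [← pos_smul _ _ hdj, ← pos_smul _ _ hdk]
        congr 1
        have := skewEntry h k j
        linarith
      have e2 : d j * max (-(B j k)) 0 = d k * max (B k j) 0 := by
        rw [← pos_smul _ _ hdj, ← pos_smul _ _ hdk]
        congr 1
        have := skewEntry h k j
        linarith
      have e3 : d k * max (B k i) 0 = d i * max (-(B i k)) 0 := by
        rw [← pos_smul _ _ hdk, ← pos_smul _ _ hdi]
        congr 1
        have := skewEntry h i k
        linarith
      have e4 : d k * max (-(B k i)) 0 = d i * max (B i k) 0 := by
        rw [← pos_smul _ _ hdk, ← pos_smul _ _ hdi]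
        congr 1
        have := skewEntry h i k
        linarith
      have hdk0 : d k ≠ 0 := (h.1 k).ne'
      apply mul_left_cancel₀ hdk0
      have expand : d k * ((B j i + max (B j k) 0 * max (B k i) 0
            - max (-B j k) 0 * max (-B k i) 0) * d j)
          = (B j i * d j) * d k + (d j * max (B j k) 0) * (d k * max (B k i) 0)
            - (d j * max (-(B j k)) 0) * (d k * max (-(B k i)) 0) := by ring
      rw [expand, e1, e2, e3, e4, e0]
      ring

lemma skew_foldl {B : Matrix (Fin n) (Fin n) ℤ} {d : Fin n → ℤ}
    (h : SkewSymmBy B d) (w : List (Fin n)) : SkewSymmBy (w.foldl mutB B) d := by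
  induction w generalizing B with
  | nil => exact h
  | cons a t ih => exact ih (skewMut h a)

/-! ### mutation basics -/

lemma mutB_apply (B : Matrix (Fin n) (Fin n) ℤ) (k i j : Fin n) :
    mutB B k i j = if i = k ∨ j = k then -B i j
      else B i j + max (B i k) 0 * max (B k j) 0 - max (-B i k) 0 * max (-B k j) 0 := rfl

lemma mutC_apply (B C : Matrix (Fin n) (Fin n) ℤ) (l i j : Fin n) :
    mutC B C l i j = if j = l then -C i j
      else C i j + max (C i l) 0 * max (B l j) 0 - max (-C i l) 0 * max (-B l j) 0 := rfl

lemma mutB_apply_left (B : Matrix (Fin n) (Fin n) ℤ) (k j : Fin n) :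
    mutB B k k j = -B k j := by rw [mutB_apply, if_pos (Or.inl rfl)]

lemma mutB_mutB (B : Matrix (Fin n) (Fin n) ℤ) (k : Fin n) : mutB (mutB B k) k = B := by
  ext i j
  by_cases h : i = k ∨ j = k
  · rw [mutB_apply, if_pos h, mutB_apply, if_pos h, neg_neg]
  · rw [mutB_apply, if_neg h]
    have h1 : mutB B k i j
        = B i j + max (B i k) 0 * max (B k j) 0 - max (-B i k) 0 * max (-B k j) 0 := by
      rw [mutB_apply, if_neg h]
    have h2 : mutB B k i k = -B i k := by rw [mutB_apply, if_pos (Or.inr rfl)]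
    have h3 : mutB B k k j = -B k j := by rw [mutB_apply, if_pos (Or.inl rfl)]
    rw [h1, h2, h3, neg_neg, neg_neg]
    ring

lemma mutB_neg (B : Matrix (Fin n) (Fin n) ℤ) (k : Fin n) : mutB (-B) k = -(mutB B k) := by
  ext i j
  rw [Matrix.neg_apply, mutB_apply, mutB_apply]
  by_cases h : i = k ∨ j = k
  · rw [if_pos h, if_pos h]; rfl
  · rw [if_neg h, if_neg h]
    show -B i j + max (-B i k) 0 * max (-B k j) 0 - max (-(-B i k)) 0 * max (-(-B k j)) 0 = _
    rw [neg_neg, neg_neg]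
    ring

lemma mutB_transpose (B : Matrix (Fin n) (Fin n) ℤ) (k : Fin n) :
    mutB Bᵀ k = (mutB B k)ᵀ := by
  ext i j
  rw [Matrix.transpose_apply, mutB_apply, mutB_apply]
  by_cases h : i = k ∨ j = k
  · rw [if_pos h, if_pos (h.symm)]; rfl
  · rw [if_neg h, if_neg (fun hh => h hh.symm)]
    show B j i + max (B k i) 0 * max (B j k) 0 - max (-B k i) 0 * max (-B j k) 0 = _
    ring

/-! ### fold lemmas -/

def step2 (p : Matrix (Fin n) (Fin n) ℤ × Matrix (Fin n) (Fin n) ℤ) (l : Fin n) :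
    Matrix (Fin n) (Fin n) ℤ × Matrix (Fin n) (Fin n) ℤ :=
  (mutB p.1 l, mutC p.1 p.2 l)

lemma BCG_proj (B0 : Matrix (Fin n) (Fin n) ℤ) (w : List (Fin n)) :
    ∀ p : Matrix (Fin n) (Fin n) ℤ × Matrix (Fin n) (Fin n) ℤ × Matrix (Fin n) (Fin n) ℤ,
      ((w.foldl (BCGstep B0) p).1, (w.foldl (BCGstep B0) p).2.1)
        = w.foldl step2 (p.1, p.2.1) := by
  induction w with
  | nil => intro p; rfl
  | cons a t ih =>
    intro p
    rw [List.foldl_cons, List.foldl_cons, ih]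
    rfl

lemma Bmat_Cmat (B0 : Matrix (Fin n) (Fin n) ℤ) (w : List (Fin n)) :
    Bmat B0 w = (w.foldl step2 (B0, 1)).1 ∧ Cmat B0 w = (w.foldl step2 (B0, 1)).2 := by
  have := BCG_proj B0 w (B0, 1, 1)
  constructor
  · exact congrArg Prod.fst this
  · exact congrArg Prod.snd this

lemma step2_fst (w : List (Fin n)) :
    ∀ p : Matrix (Fin n) (Fin n) ℤ × Matrix (Fin n) (Fin n) ℤ,
      (w.foldl step2 p).1 = w.foldl mutB p.1 := by
  induction w with
  | nil => intro p; rfl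
  | cons a t ih => intro p; rw [List.foldl_cons, List.foldl_cons, ih]; rfl

lemma Bmat_eq_foldl (B0 : Matrix (Fin n) (Fin n) ℤ) (w : List (Fin n)) :
    Bmat B0 w = w.foldl mutB B0 := by
  rw [(Bmat_Cmat B0 w).1, step2_fst]

lemma Bmat_nil (B0 : Matrix (Fin n) (Fin n) ℤ) : Bmat B0 [] = B0 := rfl
lemma Cmat_nil (B0 : Matrix (Fin n) (Fin n) ℤ) : Cmat B0 [] = 1 := rfl

lemma Bmat_concat (B0 : Matrix (Fin n) (Fin n) ℤ) (w : List (Fin n)) (l : Fin n) :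
    Bmat B0 (w ++ [l]) = mutB (Bmat B0 w) l := by
  rw [Bmat_eq_foldl, Bmat_eq_foldl, List.foldl_append]
  rfl

lemma Cmat_concat (B0 : Matrix (Fin n) (Fin n) ℤ) (w : List (Fin n)) (l : Fin n) :
    Cmat B0 (w ++ [l]) = mutC (Bmat B0 w) (Cmat B0 w) l := by
  rw [(Bmat_Cmat B0 (w ++ [l])).2, List.foldl_append]
  show mutC (List.foldl step2 (B0,1) w).1 (List.foldl step2 (B0,1) w).2 l = _
  rw [← (Bmat_Cmat B0 w).1, ← (Bmat_Cmat B0 w).2]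

lemma skew_Bmat {B : Matrix (Fin n) (Fin n) ℤ} {d : Fin n → ℤ}
    (h : SkewSymmBy B d) (w : List (Fin n)) : SkewSymmBy (Bmat B w) d := by
  rw [Bmat_eq_foldl]; exact skew_foldl h w

lemma foldl_mutB_reverse (w : List (Fin n)) :
    ∀ B : Matrix (Fin n) (Fin n) ℤ, w.reverse.foldl mutB (w.foldl mutB B) = B := by
  induction w with
  | nil => intro B; rfl
  | cons a t ih =>
    intro B
    rw [List.foldl_cons, List.reverse_cons, List.foldl_append, ih (mutB B a)]
    show mutB (mutB B a) a = B
    exact mutB_mutB B a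

lemma foldl_mutB_neg (w : List (Fin n)) :
    ∀ B : Matrix (Fin n) (Fin n) ℤ, w.foldl mutB (-B) = -(w.foldl mutB B) := by
  induction w with
  | nil => intro B; rfl
  | cons a t ih =>
    intro B
    rw [List.foldl_cons, List.foldl_cons, mutB_neg, ih]

lemma Bmat_neg (B : Matrix (Fin n) (Fin n) ℤ) (w : List (Fin n)) :
    Bmat (-B) w = -(Bmat B w) := by
  rw [Bmat_eq_foldl, Bmat_eq_foldl]; exact foldl_mutB_neg w B

lemma Bmat_cons (B : Matrix (Fin n) (Fin n) ℤ) (a : Fin n) (w : List (Fin n)) :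
    Bmat B (a :: w) = Bmat (mutB B a) w := by
  rw [Bmat_eq_foldl, Bmat_eq_foldl, List.foldl_cons]

end CP
namespace CP
open Matrix
variable {n : ℕ}

/-! ### epsCol lemmas -/

lemma epsCol_cases (C : Matrix (Fin n) (Fin n) ℤ) (j : Fin n) :
    epsCol C j = 1 ∨ epsCol C j = -1 := by
  rw [epsCol]; split
  · right; rfl
  · left; rfl

lemma epsCol_of_neg {C : Matrix (Fin n) (Fin n) ℤ} {j : Fin n}
    (h : ∃ i, C i j < 0) : epsCol C j = -1 := by rw [epsCol, if_pos h]

lemma epsCol_of_nonneg {C : Matrix (Fin n) (Fin n) ℤ} {j : Fin n}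
    (h : ∀ i, 0 ≤ C i j) : epsCol C j = 1 := by
  rw [epsCol, if_neg]
  push_neg
  exact h

lemma epsCol_one_eq (k : Fin n) : epsCol (1 : Matrix (Fin n) (Fin n) ℤ) k = 1 :=
  epsCol_of_nonneg fun i => by
    rw [Matrix.one_apply]; split <;> norm_num

lemma nonneg_of_epsCol_one {C : Matrix (Fin n) (Fin n) ℤ} {j : Fin n}
    (h : epsCol C j = 1) : ∀ i, 0 ≤ C i j := by
  intro i
  by_contra hc
  rw [epsCol_of_neg ⟨i, not_le.mp hc⟩] at h
  norm_num at h

lemma nonpos_of_epsCol_neg {C : Matrix (Fin n) (Fin n) ℤ} {j : Fin n}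
    (hcoh : (∀ i, 0 ≤ C i j) ∨ (∀ i, C i j ≤ 0))
    (h : epsCol C j = -1) : ∀ i, C i j ≤ 0 := by
  rcases hcoh with hc | hc
  · rw [epsCol_of_nonneg hc] at h; norm_num at h
  · exact hc

lemma epsCol_congr {X Y : Matrix (Fin n) (Fin n) ℤ} {j : Fin n}
    (hX : (∀ i, 0 ≤ X i j) ∨ (∀ i, X i j ≤ 0))
    (hY : (∀ i, 0 ≤ Y i j) ∨ (∀ i, Y i j ≤ 0))
    (i0 : Fin n) (heq : X i0 j = Y i0 j) (h0 : X i0 j ≠ 0) :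
    epsCol X j = epsCol Y j := by
  rcases lt_or_gt_of_ne h0 with hneg | hpos
  · rw [epsCol_of_neg ⟨i0, hneg⟩, epsCol_of_neg ⟨i0, heq ▸ hneg⟩]
  · have hXpos : ∀ i, 0 ≤ X i j := by
      rcases hX with h | h
      · exact h
      · exact absurd (h i0) (not_le.mpr hpos)
    have hYpos : ∀ i, 0 ≤ Y i j := by
      rcases hY with h | h
      · exact h
      · exact absurd (h i0) (not_le.mpr (heq ▸ hpos))
    rw [epsCol_of_nonneg hXpos, epsCol_of_nonneg hYpos]

lemma epsCol_col_single {C : Matrix (Fin n) (Fin n) ℤ} {j k : Fin n} {c : ℤ}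
    (hc : c = 1 ∨ c = -1) (h : ∀ i, C i j = if i = k then c else 0) :
    epsCol C j = c := by
  rcases hc with hc | hc
  · subst hc
    apply epsCol_of_nonneg
    intro i; rw [h i]; split <;> norm_num
  · subst hc
    exact epsCol_of_neg ⟨k, by rw [h k, if_pos rfl]; norm_num⟩

/-! ### one-step factorization of the C-recursion -/

lemma mutC_eq_mul_Mm {E C : Matrix (Fin n) (Fin n) ℤ} {l : Fin n}
    (hcoh : (∀ i, 0 ≤ C i l) ∨ (∀ i, C i l ≤ 0)) (hE : E l l = 0) :
    mutC E C l = C * Mm E l (epsCol C l) := by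
  ext i j
  rw [mul_Mm_apply hE, mutC_apply]
  by_cases hj : j = l
  · rw [if_pos hj, if_pos hj]
  · rw [if_neg hj, if_neg hj]
    rcases epsCol_cases C l with he | he
    · rw [he, one_mul]
      have := key1 (E l j) (nonneg_of_epsCol_one he i)
      linarith
    · rw [he]
      have h2 := key1' (E l j) (nonpos_of_epsCol_neg hcoh he i)
      have h3 : (-1 : ℤ) * E l j = -(E l j) := by ring
      rw [h3]
      linarith

/-! ### one-step symplectic identity -/

lemma symp_step {E : Matrix (Fin n) (Fin n) ℤ} {d : Fin n → ℤ} {l : Fin n} {ε : ℤ}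
    (hd : SkewSymmBy E d) (hε : ε = 1 ∨ ε = -1) :
    (Mm E l ε)ᵀ * (Matrix.diagonal d * E * Mm E l ε) = Matrix.diagonal d * mutB E l := by
  have hEll : E l l = 0 := skewDiag hd l
  ext i j
  have hAM : ∀ p q : Fin n, (Matrix.diagonal d * E * Mm E l ε) p q
      = if q = l then -(d p * E p q) else d p * E p q + d p * E p l * max (ε * E l q) 0 := by
    intro p q
    rw [mul_Mm_apply hEll]
    simp only [Matrix.diagonal_mul]
  rw [Mm_transpose_mul_apply, Matrix.diagonal_mul, mutB_apply]
  simp only [hAM]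
  by_cases hi : i = l
  · by_cases hj : j = l
    · simp only [hi, hj, hEll]
      simp
    · simp only [hi, hEll, if_neg hj]
      simp
      try ring
  · by_cases hj : j = l
    · simp only [hj, hEll, if_neg hi]
      simp
      try ring
    · simp only [if_neg hi, if_neg hj, if_neg (show ¬(i = l ∨ j = l) by tauto), hEll]
      have hrel : E i l * d i = -(d l * E l i) := skewEntry hd l i
      have hterm : max (ε * E l i) 0 * (d l * E l j)
          = E l j * (d i * max (-(ε * E i l)) 0) := by
        have h1 : d l * max (ε * E l i) 0 = d i * max (-(ε * E i l)) 0 := by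
          rw [← pos_smul _ _ (hd.1 l).le, ← pos_smul _ _ (hd.1 i).le]
          congr 1
          have h2 : d l * (ε * E l i) = ε * (d l * E l i) := by ring
          rw [h2, ← neg_neg (d l * E l i), ← hrel]
          ring
        calc max (ε * E l i) 0 * (d l * E l j) = (d l * max (ε * E l i) 0) * E l j := by ring
        _ = (d i * max (-(ε * E i l)) 0) * E l j := by rw [h1]
        _ = _ := by ring
      have hk2 := key2 (E i l) (E l j) ε hε
      linear_combination (d i) * hk2 + hterm

/-! ### the symplectic identity along a word -/

lemma symp (hGSC : GlobalSC n) {B : Matrix (Fin n) (Fin n) ℤ} {d : Fin n → ℤ}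
    (hd : SkewSymmBy B d) (w : List (Fin n)) :
    (Cmat B w)ᵀ * (Matrix.diagonal d * B * Cmat B w)
      = Matrix.diagonal d * Bmat B w := by
  induction w using List.reverseRecOn with
  | nil =>
    rw [Cmat_nil, Bmat_nil, Matrix.transpose_one, Matrix.mul_one, Matrix.one_mul]
  | append_singleton v l ih =>
    have hEd : SkewSymmBy (Bmat B v) d := skew_Bmat hd v
    have hfac : Cmat B (v ++ [l])
        = Cmat B v * Mm (Bmat B v) l (epsCol (Cmat B v) l) := by
      rw [Cmat_concat]
      exact mutC_eq_mul_Mm (hGSC B ⟨d, hd⟩ v l) (skewDiag hEd l)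
    rw [hfac, Bmat_concat]
    rw [Matrix.transpose_mul]
    calc ((Mm (Bmat B v) l (epsCol (Cmat B v) l))ᵀ * (Cmat B v)ᵀ)
          * (Matrix.diagonal d * B * (Cmat B v * Mm (Bmat B v) l (epsCol (Cmat B v) l)))
        = (Mm (Bmat B v) l (epsCol (Cmat B v) l))ᵀ
            * (((Cmat B v)ᵀ * (Matrix.diagonal d * B * Cmat B v))
              * Mm (Bmat B v) l (epsCol (Cmat B v) l)) := by
          simp only [Matrix.mul_assoc]
      _ = (Mm (Bmat B v) l (epsCol (Cmat B v) l))ᵀ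
            * (Matrix.diagonal d * Bmat B v * Mm (Bmat B v) l (epsCol (Cmat B v) l)) := by
          rw [ih]
      _ = Matrix.diagonal d * mutB (Bmat B v) l :=
          symp_step hEd (epsCol_cases _ _)

end CP
namespace CP
open Matrix
variable {n : ℕ}

/-! ### Δ-conjugation: `Δ C^B(w) = C^{-Bᵀ}(w) Δ` -/

lemma delta_conj {B : Matrix (Fin n) (Fin n) ℤ} {d : Fin n → ℤ}
    (hd : SkewSymmBy B d) (w : List (Fin n)) :
    Bmat (-Bᵀ) w = -(Bmat B w)ᵀ ∧
      Matrix.diagonal d * Cmat B w = Cmat (-Bᵀ) w * Matrix.diagonal d := by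
  induction w using List.reverseRecOn with
  | nil =>
    refine ⟨rfl, ?_⟩
    rw [Cmat_nil, Cmat_nil, Matrix.mul_one, Matrix.one_mul]
  | append_singleton v l ih =>
    obtain ⟨ihB, ihC⟩ := ih
    have hEd : SkewSymmBy (Bmat B v) d := skew_Bmat hd v
    constructor
    · rw [Bmat_concat, Bmat_concat, ihB]
      rw [show -(Bmat B v)ᵀ = -((Bmat B v)ᵀ) from rfl]
      rw [mutB_neg, mutB_transpose]
    · rw [Cmat_concat, Cmat_concat, ihB]
      set E := Bmat B v with hE
      set C := Cmat B v with hC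
      set Ch := Cmat (-Bᵀ) v with hCh
      have hIH : ∀ i j, d i * C i j = Ch i j * d j := by
        intro i j
        have := congrFun (congrFun ihC i) j
        rwa [Matrix.diagonal_mul, Matrix.mul_diagonal] at this
      ext i j
      rw [Matrix.diagonal_mul, Matrix.mul_diagonal, mutC_apply, mutC_apply]
      by_cases hj : j = l
      · rw [if_pos hj, if_pos hj]
        have := hIH i j
        linarith
      · rw [if_neg hj, if_neg hj]
        have a1 := hIH i l
        have hdl : (0:ℤ) ≤ d l := (hd.1 l).le
        have hdi : (0:ℤ) ≤ d i := (hd.1 i).le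
        have hdj : (0:ℤ) ≤ d j := (hd.1 j).le
        have hskew : E j l * d j = -(d l * E l j) := skewEntry hEd l j
        have hneg1 : (-Eᵀ) l j = -(E j l) := rfl
        rw [hneg1, neg_neg (E j l)]
        have p1 : d l * max (Ch i l) 0 = d i * max (C i l) 0 := by
          rw [← pos_smul _ _ hdl, ← pos_smul _ _ hdi, a1, mul_comm (Ch i l) (d l)]
        have p2 : d l * max (-(Ch i l)) 0 = d i * max (-(C i l)) 0 := by
          rw [← pos_smul _ _ hdl, ← pos_smul _ _ hdi]
          congr 1
          have : d i * -(C i l) = -(Ch i l) * d l := by linarith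
          linarith
        have q1 : d j * max (-(E j l)) 0 = d l * max (E l j) 0 := by
          rw [← pos_smul _ _ hdj, ← pos_smul _ _ hdl]
          congr 1
          linarith
        have q2 : d j * max (E j l) 0 = d l * max (-(E l j)) 0 := by
          rw [← pos_smul _ _ hdj, ← pos_smul _ _ hdl]
          congr 1
          linarith
        have P1 : (d l * max (Ch i l) 0) * (d j * max (-(E j l)) 0)
            = (d i * max (C i l) 0) * (d l * max (E l j) 0) := by rw [p1, q1]
        have P2 : (d l * max (-(Ch i l)) 0) * (d j * max (E j l) 0)
            = (d i * max (-(C i l)) 0) * (d l * max (-(E l j)) 0) := by rw [p2, q2]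
        have r := hIH i j
        have hdl0 : d l ≠ 0 := (hd.1 l).ne'
        apply mul_left_cancel₀ hdl0
        linear_combination d l * r - P1 + P2

end CP
namespace CP
open Matrix
variable {n : ℕ}

lemma skew_negT {B : Matrix (Fin n) (Fin n) ℤ} {d : Fin n → ℤ} (hd : SkewSymmBy B d) :
    SkewSymmBy (-Bᵀ) (fun i => ∏ j ∈ Finset.univ.erase i, d j) := by
  have hP : ∀ i : Fin n, (∏ j ∈ Finset.univ.erase i, d j) * d i = ∏ j, d j := by
    intro i
    rw [mul_comm]
    exact Finset.mul_prod_erase Finset.univ d (Finset.mem_univ i)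
  refine skew_of_entry (fun i => Finset.prod_pos fun j _ => hd.1 j) fun i j => ?_
  show (-Bᵀ) j i * (∏ p ∈ Finset.univ.erase j, d p) = -((∏ p ∈ Finset.univ.erase i, d p) * (-Bᵀ) i j)
  have h1 : (-Bᵀ) j i = -(B i j) := rfl
  have h2 : (-Bᵀ) i j = -(B j i) := rfl
  rw [h1, h2]
  set di := ∏ p ∈ Finset.univ.erase i, d p
  set dj := ∏ p ∈ Finset.univ.erase j, d p
  have hs : B j i * d j = -(d i * B i j) := skewEntry hd i j
  apply mul_right_cancel₀ (hd.1 j).ne'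
  calc -(B i j) * dj * d j = -(B i j) * (dj * d j) := by ring
    _ = -(B i j) * (di * d i) := by rw [hP j, hP i]
    _ = di * -(d i * B i j) := by ring
    _ = di * (B j i * d j) := by rw [hs]
    _ = -(di * -(B j i)) * d j := by ring

lemma Mm_neg_neg (E : Matrix (Fin n) (Fin n) ℤ) (l : Fin n) (ε : ℤ) :
    Mm (-E) l (-ε) = Mm E l ε := by
  rw [Mm, Mm]
  congr 2
  rw [neg_smul, smul_neg, neg_neg]

/-- The degenerate-case matrix identity. -/
lemma deg_case {B C E : Matrix (Fin n) (Fin n) ℤ} {k l : Fin n} {c : ℤ}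
    (hBkk : B k k = 0) (hEll : E l l = 0) (hcpm : c = 1 ∨ c = -1)
    (hCcol : ∀ i, C i l = if i = k then c else 0)
    (hBC : ∀ j, (B * C) k j = c * E l j) :
    (Mm B k (-c) * C) * Mm E l (-c) = Mm B k c * (C * Mm E l c) := by
  have hc2 : c * c = 1 := by rcases hcpm with h | h <;> rw [h] <;> norm_num
  ext i j
  by_cases hik : i = k
  · rw [hik]
    -- row k computations
    have hXrow : ∀ (x : ℤ) (j' : Fin n), (Mm B k x * C) k j'
        = -(C k j') + ∑ p, max (x * B k p) 0 * C p j' := fun x j' => Mm_mul_apply_row x C j'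
    have hXkl : ∀ x : ℤ, (Mm B k x * C) k l = -c := by
      intro x
      rw [hXrow]
      have hs : ∑ p, max (x * B k p) 0 * C p l = 0 := by
        apply Finset.sum_eq_zero
        intro p _
        by_cases hp : p = k
        · rw [hp, hBkk, mul_zero, maxneg le_rfl, zero_mul]
        · rw [hCcol p, if_neg hp, mul_zero]
      rw [hs, hCcol k, if_pos rfl, add_zero]
    rw [mul_Mm_apply hEll]
    conv_rhs => rw [Mm_mul_apply_row c (C * Mm E l c) j]
    by_cases hj : j = l
    · rw [if_pos hj, hj, hXkl]
      have hY : ∀ p, (C * Mm E l c) p l = -(C p l) := fun p => by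
        rw [mul_Mm_apply hEll, if_pos rfl]
      have hs : ∑ p, max (c * B k p) 0 * (C * Mm E l c) p l = 0 := by
        apply Finset.sum_eq_zero
        intro p _
        rw [hY p]
        by_cases hp : p = k
        · rw [hp, hBkk, mul_zero, maxneg le_rfl, zero_mul]
        · rw [hCcol p, if_neg hp, neg_zero, mul_zero]
      rw [hs, hY k, hCcol k, if_pos rfl, add_zero, neg_neg]
    · rw [if_neg hj, hXrow, hXkl]
      have hYk : (C * Mm E l c) k j = C k j + c * max (c * E l j) 0 := by
        rw [mul_Mm_apply hEll, if_neg hj, hCcol k, if_pos rfl]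
      have hY : ∀ p, (C * Mm E l c) p j
          = C p j + (if p = k then c else 0) * max (c * E l j) 0 := by
        intro p
        rw [mul_Mm_apply hEll, if_neg hj, hCcol p]
      have hs2 : ∑ p, max (c * B k p) 0 * (C * Mm E l c) p j
          = (∑ p, max (c * B k p) 0 * C p j) := by
        rw [Finset.sum_congr rfl (fun p _ => by rw [hY p, mul_add])]
        rw [Finset.sum_add_distrib]
        have hz : ∑ p, max (c * B k p) 0 * ((if p = k then c else 0) * max (c * E l j) 0)
            = 0 := by
          apply Finset.sum_eq_zero
          intro p _
          by_cases hp : p = k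
          · rw [hp, hBkk, mul_zero, maxneg le_rfl, zero_mul]
          · rw [if_neg hp, zero_mul, mul_zero]
        rw [hz, add_zero]
      rw [hs2, hYk]
      have hdiff : (∑ p, max (-c * B k p) 0 * C p j) - (∑ p, max (c * B k p) 0 * C p j)
          = -c * (B * C) k j := by
        rw [← Finset.sum_sub_distrib]
        rw [show -c * (B * C) k j = ∑ p, -c * B k p * C p j by
          rw [Matrix.mul_apply, Finset.mul_sum]
          exact Finset.sum_congr rfl fun p _ => by ring]
        apply Finset.sum_congr rfl
        intro p _
        have hmx : max (-c * B k p) 0 - max (c * B k p) 0 = -c * B k p := by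
          have h1 : -c * B k p = -(c * B k p) := by ring
          rw [h1]
          omega
        calc max (-c * B k p) 0 * C p j - max (c * B k p) 0 * C p j
            = (max (-c * B k p) 0 - max (c * B k p) 0) * C p j := by ring
          _ = -c * B k p * C p j := by rw [hmx]
      have hmaxE : max (-c * E l j) 0 - max (c * E l j) 0 = -c * E l j := by
        have h1 : -c * E l j = -(c * E l j) := by ring
        rw [h1]; omega
      have hbc := hBC j
      linear_combination hdiff + (-c) * hbc + (-c) * hmaxE
  · -- rows other than k
    have hX : (Mm B k (-c) * C) i j = C i j := Mm_mul_apply_ne hik _ C j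
    have hX' : ∀ j', (Mm B k (-c) * C) i j' = C i j' := fun j' => Mm_mul_apply_ne hik _ C j'
    rw [Mm_mul_apply_ne hik, mul_Mm_apply hEll, mul_Mm_apply hEll, hX', hX']
    by_cases hj : j = l
    · rw [if_pos hj, if_pos hj]
    · rw [if_neg hj, if_neg hj, hCcol i, if_neg hik, zero_mul, zero_mul]

end CP
namespace CP
open Matrix
variable {n : ℕ}

theorem mainInd (hGSC : GlobalSC n) :
    ∀ m : ℕ, ∀ w : List (Fin n), w.length = m →
      ∀ B : Matrix (Fin n) (Fin n) ℤ, ∀ d : Fin n → ℤ, SkewSymmBy B d →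
        (Cmat (-(Bmat B w)) w.reverse * Cmat B w = 1 ∧
          ∀ k, Cmat (mutB B k) (k :: w)
            = Mm B k (-(epsCol (Cmat (-(Bmat B w)) w.reverse) k)) * Cmat B w) := by
  intro m
  induction m using Nat.strong_induction_on with
  | _ m IH =>
  intro w hw B d hd
  rcases List.eq_nil_or_concat w with rfl | ⟨v, l, rfl⟩
  · -- base case w = []
    constructor
    · show Cmat (-(Bmat B [])) [] * Cmat B [] = 1
      rw [Cmat_nil, Cmat_nil, Matrix.mul_one]
    · intro k
      have hBkk : B k k = 0 := skewDiag hd k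
      show Cmat (mutB B k) ([] ++ [k]) = _
      rw [Cmat_concat, Bmat_nil, Cmat_nil]
      have heps : epsCol (Cmat (-(Bmat B [])) ([] : List (Fin n)).reverse) k = 1 := by
        show epsCol (Cmat (-(Bmat B [])) []) k = 1
        rw [Cmat_nil]
        exact epsCol_one_eq k
      rw [heps, show Cmat B ([] : List (Fin n)) = 1 from Cmat_nil B, Matrix.mul_one]
      ext i j
      rw [mutC_apply, Mm_apply']
      by_cases hj : j = k
      · rw [if_pos hj, hj, hBkk]
        by_cases hik : i = k
        · rw [hik]; simp
        · simp [hik, Matrix.one_apply]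
      · rw [if_neg hj]
        have hmut : mutB B k k j = -B k j := mutB_apply_left B k j
        by_cases hik : i = k
        · rw [hik, hmut]
          have h1 : (1 : Matrix (Fin n) (Fin n) ℤ) k k = 1 := Matrix.one_apply_eq k
          have h2 : (1 : Matrix (Fin n) (Fin n) ℤ) k j = 0 :=
            Matrix.one_apply_ne (fun h => hj h.symm)
          rw [h1, h2, if_neg (show ¬ k = j from fun h => hj h.symm), if_pos rfl,
            show (-1 : ℤ) * B k j = -(B k j) by ring]
          norm_num
        · have h2 : (1 : Matrix (Fin n) (Fin n) ℤ) i k = 0 := Matrix.one_apply_ne hik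
          rw [h2, if_neg hik, Matrix.one_apply]
          norm_num [hik]
  · -- inductive step w = v ++ [l]
    simp only [List.concat_eq_append] at hw ⊢
    have hv : v.length < m := by
      rw [← hw, List.length_append, List.length_singleton]
      omega
    have IHv := IH v.length hv v rfl B d hd
    have hEd : SkewSymmBy (Bmat B v) d := skew_Bmat hd v
    have hEll : Bmat B v l l = 0 := skewDiag hEd l
    set E := Bmat B v with hE
    set C := Cmat B v with hC
    set Dv := Cmat (-E) v.reverse with hDv
    set ε := epsCol C l with hεdef
    have hC_coh := hGSC B ⟨d, hd⟩ v
    have f1 : Cmat B (v ++ [l]) = C * Mm E l ε := by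
      rw [Cmat_concat]
      exact mutC_eq_mul_Mm (hC_coh l) hEll
    have f2 : Bmat B (v ++ [l]) = mutB E l := Bmat_concat B v l
    have hDvC : Dv * C = 1 := IHv.1
    have hCDv : C * Dv = 1 := mul_eq_one_comm.mp hDvC
    have hrev : (v ++ [l]).reverse = l :: v.reverse := by
      rw [List.reverse_append, List.reverse_singleton, List.singleton_append]
    have hBrevE : Bmat E v.reverse = B := by
      rw [hE, Bmat_eq_foldl, Bmat_eq_foldl]
      exact foldl_mutB_reverse v B
    have hBrev : Bmat (-E) v.reverse = -B := by rw [Bmat_neg, hBrevE]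
    -- the dual step: Dw = M * Dv
    have IHdual := (IH v.length hv v.reverse (by rw [List.length_reverse])
      (-E) d (skewNeg hEd)).2 l
    have f3 : Cmat (-(Bmat B (v ++ [l]))) (v ++ [l]).reverse = Mm E l ε * Dv := by
      rw [hrev, f2, ← mutB_neg]
      rw [IHdual]
      congr 1
      rw [hBrev, neg_neg, List.reverse_reverse, ← hC, ← hεdef, Mm_neg_neg]
    constructor
    · -- the inverse property at w
      rw [f3, f1, Matrix.mul_assoc, ← Matrix.mul_assoc Dv C (Mm E l ε), hDvC,
        Matrix.one_mul, Mm_mul_Mm hEll]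
    · intro k
      have hBkk : B k k = 0 := skewDiag hd k
      have hA : Cmat (mutB B k) (k :: v)
          = Mm B k (-(epsCol Dv k)) * C := IHv.2 k
      set C' := Cmat (mutB B k) (k :: v) with hC'
      set εw := epsCol Dv k with hεw
      have hB' : Bmat (mutB B k) (k :: v) = E := by
        rw [Bmat_cons, mutB_mutB, hE]
      have hcons : k :: (v ++ [l]) = (k :: v) ++ [l] := rfl
      have hC'coh := hGSC (mutB B k) ⟨d, skewMut hd k⟩ (k :: v)
      have hLHS : Cmat (mutB B k) (k :: (v ++ [l])) = C' * Mm E l (epsCol C' l) := by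
        rw [hcons, Cmat_concat, hB', ← hC']
        exact mutC_eq_mul_Mm (hC'coh l) hEll
      set ε' := epsCol C' l with hε'
      -- coherence facts
      have hDv_coh := hGSC (-E) ⟨d, skewNeg hEd⟩ v.reverse
      have hDw_coh := hGSC (-(Bmat B (v ++ [l])))
        ⟨d, skewNeg (skew_Bmat hd (v ++ [l]))⟩ (v ++ [l]).reverse
      rw [hLHS, f1]
      by_cases hdeg : ∀ i, i ≠ k → C i l = 0
      · -- degenerate case
        set c := C k l with hc
        have hCcol : ∀ i, C i l = if i = k then c else 0 := by
          intro i
          by_cases h : i = k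
          · rw [h, if_pos rfl]
          · rw [if_neg h]; exact hdeg i h
        have hsum1 : (Dv * C) l l = Dv l k * c := by
          rw [Matrix.mul_apply]
          rw [Finset.sum_eq_single_of_mem k (Finset.mem_univ k)
            (fun p _ hp => by rw [hCcol p, if_neg hp, mul_zero]), ← hc]
        have hdvc : Dv l k * c = 1 := by
          rw [← hsum1, hDvC, Matrix.one_apply_eq]
        have hcpm : c = 1 ∨ c = -1 :=
          Int.eq_one_or_neg_one_of_mul_eq_one (mul_comm (Dv l k) c ▸ hdvc)
        have hDvcol : ∀ i, Dv i k = if i = l then c else 0 := by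
          intro i
          have h1 : (Dv * C) i l = Dv i k * c := by
            rw [Matrix.mul_apply]
            rw [Finset.sum_eq_single_of_mem k (Finset.mem_univ k)
              (fun p _ hp => by rw [hCcol p, if_neg hp, mul_zero]), ← hc]
          have h2 : (Dv * C) i l = if i = l then 1 else 0 := by
            rw [hDvC, Matrix.one_apply]
          rw [h1] at h2
          by_cases hil : i = l
          · rw [if_pos hil] at h2 ⊢
            rcases hcpm with h | h <;> rw [h] at h2 ⊢ <;> omega
          · rw [if_neg hil] at h2 ⊢
            rcases hcpm with h | h <;> rw [h] at h2 <;> omega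
        have hεc : ε = c := epsCol_col_single hcpm hCcol
        have hεwc : εw = c := epsCol_col_single hcpm hDvcol
        have hmcpm : -c = 1 ∨ -c = -1 := by
          rcases hcpm with h | h <;> rw [h] <;> norm_num
        have hC'col : ∀ i, C' i l = if i = k then -c else 0 := by
          intro i
          rw [hA, hεwc]
          by_cases hik : i = k
          · rw [hik, if_pos rfl, Mm_mul_apply_row]
            have hs : ∑ p, max (-c * B k p) 0 * C p l = 0 := by
              apply Finset.sum_eq_zero
              intro p _
              by_cases hp : p = k
              · rw [hp, hBkk, mul_zero, maxneg le_rfl, zero_mul]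
              · rw [hCcol p, if_neg hp, mul_zero]
            rw [hs, add_zero, ← hc]
          · rw [if_neg hik, Mm_mul_apply_ne hik]
            exact hdeg i hik
        have hε'c : ε' = -c := epsCol_col_single hmcpm hC'col
        have hDwcol : ∀ i, Cmat (-(Bmat B (v ++ [l]))) (v ++ [l]).reverse i k
            = if i = l then -c else 0 := by
          intro i
          rw [f3]
          by_cases hil : i = l
          · rw [hil, if_pos rfl, Mm_mul_apply_row]
            have hs : ∑ p, max (ε * E l p) 0 * Dv p k = 0 := by
              apply Finset.sum_eq_zero
              intro p _
              by_cases hp : p = l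
              · rw [hp, hEll, mul_zero, maxneg le_rfl, zero_mul]
              · rw [hDvcol p, if_neg hp, mul_zero]
            rw [hs, add_zero, hDvcol l, if_pos rfl]
          · rw [if_neg hil, Mm_mul_apply_ne hil]
            rw [hDvcol i, if_neg hil]
        have hεw'c : epsCol (Cmat (-(Bmat B (v ++ [l]))) (v ++ [l]).reverse) k = -c :=
          epsCol_col_single hmcpm hDwcol
        rw [hεw'c, hε'c, hεc, neg_neg]
        -- now需要 hBC
        have hsymp := symp hGSC hd v
        have hdkl : d k = d l := by
          have hconj := (delta_conj hd v).2
          set Ch := Cmat (-Bᵀ) v with hCh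
          have hcent : ∀ i, d i * C i l = Ch i l * d l := by
            intro i
            have := congrFun (congrFun hconj i) l
            rwa [Matrix.diagonal_mul, Matrix.mul_diagonal] at this
          have ht : Ch k l * d l = d k * c := by rw [← hcent k, ← hc]
          have hChcol : ∀ i, i ≠ k → Ch i l = 0 := by
            intro i hik
            have h1 := hcent i
            rw [hdeg i hik, mul_zero] at h1
            rcases mul_eq_zero.mp h1.symm with h | h
            · exact h
            · exact absurd h (hd.1 l).ne'
          have IHt := (IH v.length hv v rfl (-Bᵀ)
            (fun i => ∏ j ∈ Finset.univ.erase i, d j) (skew_negT hd)).1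
          have hDhCh : Cmat (-(Bmat (-Bᵀ) v)) v.reverse * Ch = 1 := IHt
          have hth : (Cmat (-(Bmat (-Bᵀ) v)) v.reverse * Ch) l l
              = Cmat (-(Bmat (-Bᵀ) v)) v.reverse l k * Ch k l := by
            rw [Matrix.mul_apply]
            exact Finset.sum_eq_single_of_mem k (Finset.mem_univ k)
              (fun p _ hp => by rw [hChcol p hp, mul_zero])
          have hth1 : Cmat (-(Bmat (-Bᵀ) v)) v.reverse l k * Ch k l = 1 := by
            rw [← hth, hDhCh, Matrix.one_apply_eq]
          have hth2 : Ch k l * Cmat (-(Bmat (-Bᵀ) v)) v.reverse l k = 1 := by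
            rw [mul_comm]; exact hth1
          have htpm : Ch k l = 1 ∨ Ch k l = -1 :=
            Int.eq_one_or_neg_one_of_mul_eq_one hth2
          have hdk := hd.1 k
          have hdl := hd.1 l
          rcases htpm with h | h <;> rcases hcpm with h' | h' <;>
            rw [h, h'] at ht <;> omega
        have hBC : ∀ j, (B * C) k j = c * E l j := by
          intro j
          have h1 := congrFun (congrFun hsymp l) j
          rw [← hC, ← hE] at h1
          have h2 : (Cᵀ * (Matrix.diagonal d * B * C)) l j
              = c * ((Matrix.diagonal d * B * C) k j) := by
            rw [Matrix.mul_apply]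
            rw [Finset.sum_eq_single_of_mem k (Finset.mem_univ k)
              (fun p _ hp => by rw [Matrix.transpose_apply, hCcol p, if_neg hp, zero_mul])]
            rw [Matrix.transpose_apply, hCcol k, if_pos rfl]
          have h3 : (Matrix.diagonal d * B * C) k j = d k * (B * C) k j := by
            rw [Matrix.mul_assoc, Matrix.diagonal_mul]
          have h4 : (Matrix.diagonal d * E) l j = d l * E l j := Matrix.diagonal_mul d E l j
          rw [h2, h3, h4, hdkl] at h1
          apply mul_left_cancel₀ (hd.1 l).ne'
          rcases hcpm with h | h <;> rw [h] at h1 ⊢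
          · linear_combination h1
          · linear_combination -h1
        rw [hA, hεwc]
        exact deg_case hBkk hEll hcpm hCcol hBC
      · -- nondegenerate case
        push_neg at hdeg
        obtain ⟨i0, hi0k, hi0⟩ := hdeg
        have hC'val : C' i0 l = C i0 l := by
          rw [hA]
          exact Mm_mul_apply_ne hi0k _ C l
        have hε'ε : ε' = ε := by
          rw [hε', hεdef]
          exact epsCol_congr (hC'coh l) (hC_coh l) i0 hC'val (hC'val ▸ hi0)
        have hDvnz : ∃ i1, i1 ≠ l ∧ Dv i1 k ≠ 0 := by
          by_contra hcon
          push_neg at hcon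
          have h1 : (C * Dv) i0 k = C i0 l * Dv l k := by
            rw [Matrix.mul_apply]
            exact Finset.sum_eq_single_of_mem l (Finset.mem_univ l)
              (fun p _ hp => by rw [hcon p hp, mul_zero])
          have h2 : (C * Dv) i0 k = 0 := by
            rw [hCDv, Matrix.one_apply, if_neg hi0k]
          have h3 : Dv l k = 0 := by
            rcases mul_eq_zero.mp (h1 ▸ h2) with h | h
            · exact absurd h hi0
            · exact h
          have h4 : (C * Dv) k k = 0 := by
            rw [Matrix.mul_apply]
            apply Finset.sum_eq_zero
            intro p _
            by_cases hp : p = l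
            · rw [hp, h3, mul_zero]
            · rw [hcon p hp, mul_zero]
          rw [hCDv, Matrix.one_apply_eq] at h4
          norm_num at h4
        obtain ⟨i1, hi1l, hi1⟩ := hDvnz
        have hDw1 : Cmat (-(Bmat B (v ++ [l]))) (v ++ [l]).reverse i1 k = Dv i1 k := by
          rw [f3]
          exact Mm_mul_apply_ne hi1l _ Dv k
        have hεw'εw : epsCol (Cmat (-(Bmat B (v ++ [l]))) (v ++ [l]).reverse) k = εw := by
          rw [hεw]
          exact epsCol_congr (hDw_coh k) (hDv_coh k) i1 hDw1 (hDw1 ▸ hi1)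
        rw [hεw'εw, hε'ε, hA, Matrix.mul_assoc]

end CP

/-- mutation of C-matrices at the initial vertex: under the global
sign-coherence hypothesis, with `ε = ε_k(C^{-B^B(w)}(rev w))`,
`C^{μ_k(B)}(k·w) = (J_k + [-εB]₊^{k•}) C^B(w)`. -/
theorem Cmat_initial_seed_mutation {n : ℕ} (hGSC : GlobalSC n)
    (B : Matrix (Fin n) (Fin n) ℤ) (hB : SkewSymmetrizable B)
    (k : Fin n) (w : List (Fin n)) :
    Cmat (mutB B k) (k :: w)
      = (Jmat n k + rowR (matPos ((-(epsCol (Cmat (-(Bmat B w)) w.reverse) k)) • B)) k)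
          * Cmat B w := by
  obtain ⟨d, hd⟩ := hB
  exact (CP.mainInd hGSC w.length w rfl B d hd).2 k
end
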